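/- Let B be an exact Krull–Schmidt Frobenius k-category whose stable category B̄ has finite-dimensional Hom-spaces, and let C be a functorially finite maximal (d−1)-orthogonal subcategory with d ≥ 2 and C̄[d] = C̄. Then for every M ∈ mod-C̄ there is an isomorphism Tor^C_{d+1}(M, C̄) ≅ Ω^{d+2}_{C̄}(M) in the stable category of mod-C̄, natural in M, where Ω_{C̄} is the syzygy functor of mod-C̄. -/

import Mathlib

open CategoryTheory CategoryTheory.Limits

universe v u

/-- Bundled data of an exact Krull–Schmidt Frobenius `k`-category: an additive
`k`-linear category equipped with a class of admissible short exact sequences,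
a class of projective(-injective) objects satisfying the usual lifting
properties on both sides (the Frobenius property), chosen projective covers
with syzygies and injective envelopes with cosyzygies (enough projectives and
enough injectives), the Krull--Schmidt property, and Hom-finiteness of the
stable category (Hom's modulo maps factoring through projectives). -/
structure FrobeniusSetup (k : Type) [Field k] (B : Type u) [Category.{v} B] [Preadditive B]
    [CategoryTheory.Linear k B] [HasFiniteBiproducts B] [HasBinaryBiproducts B] : Type (max u v) where
  /-- the admissible short exact sequences `0 → X → Y → Z → 0` of the exact structure -/
  IsSES : ∀ {X Y Z : B}, (X ⟶ Y) → (Y ⟶ Z) → Prop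
  /-- the projective (equivalently injective) objects -/
  Proj : B → Prop
  ses_zero : ∀ {X Y Z : B} (f : X ⟶ Y) (g : Y ⟶ Z), IsSES f g → f ≫ g = 0
  /-- in an admissible short exact sequence, `f` is a kernel of `g` -/
  ses_ker : ∀ {X Y Z : B} (f : X ⟶ Y) (g : Y ⟶ Z), IsSES f g →
      ∀ {W : B} (u : W ⟶ Y), u ≫ g = 0 → ∃! v : W ⟶ X, v ≫ f = u
  /-- in an admissible short exact sequence, `g` is a cokernel of `f` -/
  ses_coker : ∀ {X Y Z : B} (f : X ⟶ Y) (g : Y ⟶ Z), IsSES f g →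
      ∀ {W : B} (u : Y ⟶ W), f ≫ u = 0 → ∃! v : Z ⟶ W, g ≫ v = u
  /-- admissible short exact sequences are closed under isomorphism -/
  ses_iso : ∀ {X Y Z X' Y' Z' : B} (f : X ⟶ Y) (g : Y ⟶ Z)
      (iX : X ≅ X') (iY : Y ≅ Y') (iZ : Z ≅ Z') (f' : X' ⟶ Y') (g' : Y' ⟶ Z'),
      IsSES f g → f ≫ iY.hom = iX.hom ≫ f' → g ≫ iZ.hom = iY.hom ≫ g' → IsSES f' g'
  /-- split exact sequences are admissible -/
  ses_split : ∀ X Y : B, IsSES (biprod.inl : X ⟶ X ⊞ Y) (biprod.snd : X ⊞ Y ⟶ Y)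
  /-- the `Proj` objects are precisely the projective objects of the exact structure -/
  proj_iff : ∀ P : B, Proj P ↔
      (∀ {X Y Z : B} (f : X ⟶ Y) (g : Y ⟶ Z), IsSES f g →
        ∀ h : P ⟶ Z, ∃ l : P ⟶ Y, l ≫ g = h)
  /-- the Frobenius property: `Proj` objects are precisely the injective objects -/
  inj_iff : ∀ P : B, Proj P ↔
      (∀ {X Y Z : B} (f : X ⟶ Y) (g : Y ⟶ Z), IsSES f g →
        ∀ h : X ⟶ P, ∃ l : Y ⟶ P, f ≫ l = h)
  /-- a chosen projective cover (enough projectives) -/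
  P : B → B
  projP : ∀ X : B, Proj (P X)
  pr : ∀ X : B, P X ⟶ X
  /-- the chosen syzygy -/
  syz : B → B
  syzMono : ∀ X : B, syz X ⟶ P X
  ses_syz : ∀ X : B, IsSES (syzMono X) (pr X)
  /-- a chosen injective envelope (enough injectives) -/
  I : B → B
  projI : ∀ X : B, Proj (I X)
  en : ∀ X : B, X ⟶ I X
  /-- the chosen cosyzygy, i.e. the suspension of the stable category -/
  cosyz : B → B
  cosyzEpi : ∀ X : B, I X ⟶ cosyz X
  ses_cosyz : ∀ X : B, IsSES (en X) (cosyzEpi X)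
  /-- the Krull–Schmidt property: every object is a finite biproduct of objects
  with local endomorphism rings -/
  krullSchmidt : ∀ X : B, ∃ (n : ℕ) (Y : Fin n → B),
      (∀ i, IsLocalRing (End (Y i))) ∧ Nonempty (X ≅ ⨁ Y)
  /-- Hom-finiteness of the stable category -/
  homFinite : ∀ X Y : B, FiniteDimensional k
      ((X ⟶ Y) ⧸ Submodule.span k
        {f : X ⟶ Y | ∃ (Q : B) (g : X ⟶ Q) (h : Q ⟶ Y), Proj Q ∧ f = g ≫ h})

namespace FrobeniusSetup

variable {k : Type} [Field k] {B : Type u} [Category.{v} B] [Preadditive B]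
  [CategoryTheory.Linear k B] [HasFiniteBiproducts B] [HasBinaryBiproducts B] (S : FrobeniusSetup k B)

/-- The ideal of maps factoring through a projective object. -/
def projIdeal (X Y : B) : Submodule k (X ⟶ Y) :=
  Submodule.span k {f : X ⟶ Y | ∃ (Q : B) (g : X ⟶ Q) (h : Q ⟶ Y), S.Proj Q ∧ f = g ≫ h}

/-- Stable Hom: morphisms in the stable category `B̄`. -/
def sHom (X Y : B) : Type v := (X ⟶ Y) ⧸ S.projIdeal X Y

noncomputable instance (X Y : B) : AddCommGroup (S.sHom X Y) :=
  inferInstanceAs (AddCommGroup ((X ⟶ Y) ⧸ S.projIdeal X Y))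

noncomputable instance (X Y : B) : Module k (S.sHom X Y) :=
  inferInstanceAs (Module k ((X ⟶ Y) ⧸ S.projIdeal X Y))

/-- The class of a morphism in the stable category. -/
def sMk {X Y : B} (f : X ⟶ Y) : S.sHom X Y := Submodule.Quotient.mk f

/-- Vanishing of the stable Hom-space `B̄(X,Y)`. -/
def sVanish (X Y : B) : Prop := S.projIdeal X Y = ⊤

/-- `X` and `Y` are isomorphic in the stable category `B̄`. -/
def StIso (X Y : B) : Prop :=
  ∃ (f : X ⟶ Y) (g : Y ⟶ X),
    f ≫ g - 𝟙 X ∈ S.projIdeal X X ∧ g ≫ f - 𝟙 Y ∈ S.projIdeal Y Y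

/-- The shift (suspension) `X[n]` in the stable category: iterated cosyzygies for
`n ≥ 0` and iterated syzygies for `n < 0`. -/
def shift : ℤ → B → B
  | Int.ofNat n, X => S.cosyz^[n] X
  | Int.negSucc n, X => S.syz^[n + 1] X

/-- `Ext^i_B(X,Y) = 0`, expressed via the standard identification
`Ext^i(X,Y) ≅ B̄(Ω^i X, Y)` for `i ≥ 1` valid in a Frobenius category. -/
def extVanish (i : ℕ) (X Y : B) : Prop := S.sVanish (S.syz^[i] X) Y

/-- `C` is a maximal `(d-1)`-orthogonal subcategory of `B`. -/
def MaxOrthogonal (C : Set B) (d : ℕ) : Prop :=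
  (∀ X : B, X ∈ C ↔ ∀ i : ℕ, 1 ≤ i → i < d → ∀ C₀ ∈ C, S.extVanish i X C₀) ∧
  (∀ Y : B, Y ∈ C ↔ ∀ i : ℕ, 1 ≤ i → i < d → ∀ C₀ ∈ C, S.extVanish i C₀ Y)

/-- `C` is functorially finite in `B`: every object admits a right and a left
`C`-approximation. -/
def FunctoriallyFinite (_S : FrobeniusSetup k B) (C : Set B) : Prop :=
  (∀ X : B, ∃ C₀ ∈ C, ∃ f : C₀ ⟶ X, ∀ C₁ ∈ C, ∀ g : C₁ ⟶ X, ∃ h : C₁ ⟶ C₀, h ≫ f = g) ∧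
  (∀ X : B, ∃ C₀ ∈ C, ∃ f : X ⟶ C₀, ∀ C₁ ∈ C, ∀ g : X ⟶ C₁, ∃ h : C₀ ⟶ C₁, f ≫ h = g)

/-- The subcategory `E_j = {X | B̄(C, X[i]) = 0 for 1 ≤ i ≤ d-1, i ≠ j}`. -/
def Esub (C : Set B) (d j : ℕ) : Set B :=
  {X : B | ∀ i : ℕ, 1 ≤ i → i ≤ d - 1 → i ≠ j → ∀ C₀ ∈ C, S.sVanish C₀ (S.cosyz^[i] X)}

/-- `C̄[d] = C̄`: the `d`-th syzygy of every object of `C` again lies in `C`,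
up to stable isomorphism (i.e. up to projective summands). -/
def ShiftStable (C : Set B) (d : ℕ) : Prop :=
  ∀ C₀ ∈ C, ∃ C₁ ∈ C, S.StIso (S.syz^[d] C₀) C₁

end FrobeniusSetup
namespace FrobeniusSetup

section FunctorCats

variable {k : Type} [Field k] {B : Type u} [Category.{v} B] [Preadditive B]
  [CategoryTheory.Linear k B] [HasFiniteBiproducts B] [HasBinaryBiproducts B]
  (S : FrobeniusSetup k B)

/-- Postcomposition on stable Hom's. -/
noncomputable def sComp (X : B) {Y Z : B} (w : Y ⟶ Z) : S.sHom X Y →ₗ[k] S.sHom X Z :=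
  Submodule.mapQ _ _ (Linear.rightComp k X w) (by
    simp only [projIdeal, Submodule.span_le]
    rintro f ⟨Q, g, h, hQ, rfl⟩
    exact Submodule.mem_comap.2 (Submodule.subset_span ⟨Q, g, h ≫ w, hQ, by simp⟩))

/-- Precomposition on stable Hom's. -/
noncomputable def sPre {W X : B} (u : W ⟶ X) (Y : B) : S.sHom X Y →ₗ[k] S.sHom W Y :=
  Submodule.mapQ _ _ (Linear.leftComp k Y u) (by
    simp only [projIdeal, Submodule.span_le]
    rintro f ⟨Q, g, h, hQ, rfl⟩
    exact Submodule.mem_comap.2 (Submodule.subset_span ⟨Q, u ≫ g, h, hQ, by simp⟩))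

@[simp] lemma sComp_mk (X : B) {Y Z : B} (w : Y ⟶ Z) (f : X ⟶ Y) :
    S.sComp X w (S.sMk f) = S.sMk (f ≫ w) := rfl

@[simp] lemma sPre_mk {W X : B} (u : W ⟶ X) (Y : B) (f : X ⟶ Y) :
    S.sPre u Y (S.sMk f) = S.sMk (u ≫ f) := rfl

variable (CC : Set B)

/-- The restriction to `C` of the representable functor `B(-,X)`; for `X ∈ C`
these are exactly the projective objects of `mod-C`. -/
def LinRep (X : B) : (ObjectProperty.FullSubcategory (· ∈ CC))ᵒᵖ ⥤ ModuleCat k :=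
  (ObjectProperty.ι (· ∈ CC)).op ⋙ (linearYoneda k B).obj X

/-- The natural transformation `B(-,X) ⟶ B(-,Y)` induced by `w : X ⟶ Y`. -/
def lMap {X Y : B} (w : X ⟶ Y) : LinRep (k := k) CC X ⟶ LinRep CC Y :=
  CategoryTheory.Functor.whiskerLeft (ObjectProperty.ι (· ∈ CC)).op
    ((linearYoneda k B).map w)

/-- The restriction to `C̄` of the stable representable functor `B̄(-,X)`. -/
noncomputable def SRep (X : B) : (ObjectProperty.FullSubcategory (· ∈ CC))ᵒᵖ ⥤ ModuleCat k where
  obj c := ModuleCat.of k (S.sHom c.unop.obj X)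
  map {c c'} u := ModuleCat.ofHom (S.sPre (u.unop.hom : c'.unop.obj ⟶ c.unop.obj) X)
  map_id c := by
    ext x
    obtain ⟨f, rfl⟩ := Submodule.Quotient.mk_surjective _ x
    show S.sMk ((𝟙 c.unop.obj : c.unop.obj ⟶ c.unop.obj) ≫ f) = S.sMk f
    rw [Category.id_comp]
  map_comp {c c' c''} u v := by
    ext x
    obtain ⟨f, rfl⟩ := Submodule.Quotient.mk_surjective _ x
    show S.sMk (((v.unop.hom : c''.unop.obj ⟶ c'.unop.obj) ≫
        (u.unop.hom : c'.unop.obj ⟶ c.unop.obj)) ≫ f)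
      = S.sMk ((v.unop.hom : c''.unop.obj ⟶ c'.unop.obj) ≫
        ((u.unop.hom : c'.unop.obj ⟶ c.unop.obj) ≫ f))
    rw [Category.assoc]

/-- The natural transformation `B̄(-,X) ⟶ B̄(-,Y)` induced by `w : X ⟶ Y`. -/
noncomputable def sMap {X Y : B} (w : X ⟶ Y) : S.SRep CC X ⟶ S.SRep CC Y where
  app c := ModuleCat.ofHom (S.sComp c.unop.obj w)
  naturality {c c'} u := by
    ext x
    obtain ⟨f, rfl⟩ := Submodule.Quotient.mk_surjective _ x
    show S.sMk (((u.unop.hom : c'.unop.obj ⟶ c.unop.obj) ≫ f) ≫ w)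
      = S.sMk ((u.unop.hom : c'.unop.obj ⟶ c.unop.obj) ≫ (f ≫ w))
    rw [Category.assoc]

/-- A functor on `C` underlies a functor on the stable category `C̄` iff it kills
all maps factoring through a projective object of `B`. -/
def KillsProj (M : (ObjectProperty.FullSubcategory (· ∈ CC))ᵒᵖ ⥤ ModuleCat k) : Prop :=
  ∀ (c c' : (ObjectProperty.FullSubcategory (· ∈ CC))ᵒᵖ) (u : c ⟶ c'),
    (u.unop.hom : c'.unop.obj ⟶ c.unop.obj) ∈ S.projIdeal c'.unop.obj c.unop.obj → M.map u = 0

/-- `M` is a finitely presented k-linear contravariant functor on the stable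
category `C̄`, i.e. an object of `mod-C̄`: it admits a projective presentation
`B̄(-,C₁) → B̄(-,C₀) → M → 0` by (restricted) stable representables. -/
def IsFPStable (M : (ObjectProperty.FullSubcategory (· ∈ CC))ᵒᵖ ⥤ ModuleCat k) : Prop :=
  ∃ (C₁ C₀ : B), C₁ ∈ CC ∧ C₀ ∈ CC ∧
    ∃ (φ : S.SRep CC C₁ ⟶ S.SRep CC C₀) (ε : S.SRep CC C₀ ⟶ M),
      ∀ c, Function.Surjective (ε.app c) ∧ Function.Exact (φ.app c) (ε.app c)

/-- `M` is a finitely presented k-linear contravariant functor on `C`,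
i.e. an object of `mod-C`. -/
def IsFP (M : (ObjectProperty.FullSubcategory (· ∈ CC))ᵒᵖ ⥤ ModuleCat k) : Prop :=
  ∃ (C₁ C₀ : B), C₁ ∈ CC ∧ C₀ ∈ CC ∧
    ∃ (φ : LinRep (k := k) CC C₁ ⟶ LinRep CC C₀) (ε : LinRep (k := k) CC C₀ ⟶ M),
      ∀ c, Function.Surjective (ε.app c) ∧ Function.Exact (φ.app c) (ε.app c)

end FunctorCats

end FrobeniusSetup

/-!
Applying `− ⊗_C C̄` to the resolution `B(-,C_•) → M` gives the complex
`B̄(-,C_{d+1}) → ⋯ → B̄(-,C₀) → M → 0`, whose kernel at the left end is `Tor^C_{d+1}(M, C̄)`;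
it remains to see that it is exact everywhere else. At `M` this holds because `M` kills the maps
that factor through projectives. In the middle, a stably trivial cycle `r : Z ⟶ C_s` factors
through the injective envelope `I Z ∈ C`; correcting by the exactness of the resolution at `I Z`
leaves a map that descends to the cosyzygy `Z[1]`, where it is again a stably trivial cycle, one
degree lower. Stable triviality comes from `B̄(c[m], c') = 0` for `c, c' ∈ C` and `0 < m < d`,
which is where `C̄[d] = C̄` enters: `c' ≅ (Ω^d c')[d]` and `Ω^d c' ∈ C̄`.
-/

universe w

lemma injective_kernel_ι_app {R : Type*} [Ring R] {J : Type*} [Category J]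
    {F G : J ⥤ ModuleCat.{w} R} (f : F ⟶ G) (c : J) : Function.Injective ((kernel.ι f).app c) :=
  (ModuleCat.mono_iff_injective _).1 inferInstance

lemma exact_kernel_ι_app {R : Type*} [Ring R] {J : Type*} [Category J]
    {F G : J ⥤ ModuleCat.{w} R} (f : F ⟶ G) (c : J) :
    Function.Exact ((kernel.ι f).app c) (f.app c) :=
  (ShortComplex.ShortExact.moduleCat_exact_iff_function_exact _).1
    ((ShortComplex.kernelSequence_exact f).map ((evaluation J _).obj c))

namespace FrobeniusSetup

variable {k : Type} [Field k] {B : Type u} [Category.{v} B] [Preadditive B]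
  [CategoryTheory.Linear k B] [HasFiniteBiproducts B] [HasBinaryBiproducts B]
  (S : FrobeniusSetup k B)

lemma comp_mem_projIdeal_of_proj {X Q Y : B} (hQ : S.Proj Q) (a : X ⟶ Q) (b : Q ⟶ Y) :
    a ≫ b ∈ S.projIdeal X Y :=
  Submodule.subset_span ⟨Q, a, b, hQ, rfl⟩

lemma en_comp_mem_projIdeal {X Y : B} (q : S.I X ⟶ Y) : S.en X ≫ q ∈ S.projIdeal X Y :=
  S.comp_mem_projIdeal_of_proj (S.projI X) _ _

lemma exists_en_comp_of_mem_projIdeal {X Y : B} {f : X ⟶ Y} (hf : f ∈ S.projIdeal X Y) :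
    ∃ q : S.I X ⟶ Y, f = S.en X ≫ q := by
  induction hf using Submodule.span_induction with
  | mem f hf =>
    obtain ⟨Q, a, b, hQ, rfl⟩ := hf
    obtain ⟨l, hl⟩ := (S.inj_iff Q).1 hQ _ _ (S.ses_cosyz X) a
    exact ⟨l ≫ b, by rw [← Category.assoc, hl]⟩
  | zero => exact ⟨0, by simp⟩
  | add f f' _ _ hf hf' =>
    obtain ⟨q, rfl⟩ := hf
    obtain ⟨q', rfl⟩ := hf'
    exact ⟨q + q', by simp⟩
  | smul r f _ hf =>
    obtain ⟨q, rfl⟩ := hf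
    exact ⟨r • q, by simp⟩

lemma comp_mem_projIdeal_left {X Y Z : B} (u : X ⟶ Y) {f : Y ⟶ Z}
    (hf : f ∈ S.projIdeal Y Z) : u ≫ f ∈ S.projIdeal X Z := by
  obtain ⟨q, rfl⟩ := S.exists_en_comp_of_mem_projIdeal hf
  rw [← Category.assoc]
  exact S.comp_mem_projIdeal_of_proj (S.projI Y) _ _

lemma comp_mem_projIdeal_right {X Y Z : B} {f : X ⟶ Y} (hf : f ∈ S.projIdeal X Y)
    (v : Y ⟶ Z) : f ≫ v ∈ S.projIdeal X Z := by
  obtain ⟨q, rfl⟩ := S.exists_en_comp_of_mem_projIdeal hf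
  rw [Category.assoc]
  exact S.en_comp_mem_projIdeal _

lemma ses_epi_cancel {X Y Z W : B} {f : X ⟶ Y} {p : Y ⟶ Z} (hs : S.IsSES f p)
    {a b : Z ⟶ W} (h : p ≫ a = p ≫ b) : a = b := by
  obtain ⟨v, -, huniq⟩ := S.ses_coker f p hs (p ≫ a)
    (by rw [← Category.assoc, S.ses_zero f p hs, zero_comp])
  rw [huniq a rfl, huniq b h.symm]

lemma sVanish_iff {X Y : B} : S.sVanish X Y ↔ ∀ f : X ⟶ Y, f ∈ S.projIdeal X Y :=
  Submodule.eq_top_iff'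

lemma sVanish_of_proj_right {X Y : B} (hY : S.Proj Y) : S.sVanish X Y :=
  S.sVanish_iff.2 fun f => by simpa using S.comp_mem_projIdeal_of_proj hY f (𝟙 Y)

lemma mem_of_proj {C : Set B} {d : ℕ} (hmax : S.MaxOrthogonal C d) {Q : B} (hQ : S.Proj Q) :
    Q ∈ C :=
  (hmax.2 Q).2 fun _ _ _ _ _ => S.sVanish_of_proj_right hQ

lemma sVanish_of_stIso_right {X Y Y' : B} (h : S.sVanish X Y) (e : S.StIso Y' Y) :
    S.sVanish X Y' := by
  obtain ⟨φ, ψ, hφψ, -⟩ := e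
  refine S.sVanish_iff.2 fun f => ?_
  have hf : f = (f ≫ φ) ≫ ψ - f ≫ (φ ≫ ψ - 𝟙 Y') := by
    rw [Preadditive.comp_sub, Category.comp_id, Category.assoc, sub_sub_cancel]
  rw [hf]
  exact Submodule.sub_mem _ (S.comp_mem_projIdeal_right (S.sVanish_iff.1 h _) ψ)
    (S.comp_mem_projIdeal_left f hφψ)

/-- A map `U ⟶ W` lifts to `P ⟶ I` and restricts to `X ⟶ V`; when the restriction factors through
`I X`, extending it over `P` corrects the lift to one that descends to `U ⟶ I`. -/
lemma sVanish_of_ses {X P U V I W : B} {i : X ⟶ P} {p : P ⟶ U} {j : V ⟶ I} {q : I ⟶ W}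
    (hip : S.IsSES i p) (hP : S.Proj P) (hjq : S.IsSES j q) (hI : S.Proj I)
    (h : S.sVanish X V) : S.sVanish U W := by
  refine S.sVanish_iff.2 fun f => ?_
  obtain ⟨l, hl⟩ := (S.proj_iff P).1 hP _ _ hjq (p ≫ f)
  obtain ⟨m, hm, -⟩ := S.ses_ker _ _ hjq (i ≫ l) (by
    rw [Category.assoc, hl, ← Category.assoc, S.ses_zero _ _ hip, zero_comp])
  obtain ⟨b, hb⟩ := S.exists_en_comp_of_mem_projIdeal (S.sVanish_iff.1 h m)
  obtain ⟨a, ha⟩ := (S.inj_iff _).1 (S.projI X) _ _ hip (S.en X)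
  obtain ⟨n, hn, -⟩ := S.ses_coker _ _ hip (l - a ≫ b ≫ j) (by
    rw [Preadditive.comp_sub, reassoc_of% ha, ← Category.assoc, ← hb, hm, sub_self])
  have hf : n ≫ q = f := S.ses_epi_cancel hip (by
    rw [reassoc_of% hn, Preadditive.sub_comp, Category.assoc, Category.assoc,
      S.ses_zero _ _ hjq, comp_zero, comp_zero, sub_zero, hl])
  rw [← hf]
  exact S.comp_mem_projIdeal_of_proj hI n q

lemma sVanish_of_sVanish_syz_iterate {U V : B} (n : ℕ)
    (h : S.sVanish (S.syz^[n] U) (S.syz^[n] V)) : S.sVanish U V := by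
  induction n with
  | zero => exact h
  | succ n ih =>
    rw [Function.iterate_succ_apply', Function.iterate_succ_apply'] at h
    exact ih (S.sVanish_of_ses (S.ses_syz _) (S.projP _) (S.ses_syz _) (S.projP _) h)

lemma sVanish_cosyz_iterate_of_sVanish_syz_iterate {U V : B} (n : ℕ)
    (h : S.sVanish U (S.syz^[n] V)) : S.sVanish (S.cosyz^[n] U) V := by
  induction n generalizing U with
  | zero => exact h
  | succ n ih =>
    rw [Function.iterate_succ_apply'] at h
    exact ih (S.sVanish_of_ses (S.ses_cosyz _) (S.projI _) (S.ses_syz _) (S.projP _) h)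

lemma sVanish_cosyz_iterate_of_maxOrthogonal {C : Set B} {d : ℕ}
    (hmax : S.MaxOrthogonal C d) (hstab : S.ShiftStable C d) {c c' : B} (hc : c ∈ C)
    (hc' : c' ∈ C) {m : ℕ} (hm : 1 ≤ m) (hmd : m < d) : S.sVanish (S.cosyz^[m] c) c' := by
  obtain ⟨c₁, hc₁, e⟩ := hstab c' hc'
  have h : S.sVanish (S.syz^[d - m] c) (S.syz^[d] c') :=
    S.sVanish_of_stIso_right ((hmax.1 c).1 hc (d - m) (by omega) (by omega) c₁ hc₁) e
  refine S.sVanish_cosyz_iterate_of_sVanish_syz_iterate m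
    (S.sVanish_of_sVanish_syz_iterate (d - m) ?_)
  rwa [← Function.iterate_add_apply, Nat.sub_add_cancel hmd.le]

/-- No condition in degree `0`: the augmentation kills the stably trivial maps considered below. -/
def IsCycle {X : ℕ → B} (g : ∀ i, X (i + 1) ⟶ X i) {Z : B} : ∀ s, (Z ⟶ X s) → Prop
  | 0, _ => True
  | t + 1, r => r ≫ g t = 0

theorem exists_mem_projIdeal_comp_eq_of_isCycle {d : ℕ} {X : ℕ → B} {g : ∀ i, X (i + 1) ⟶ X i}
    (hgg : ∀ i < d, g (i + 1) ≫ g i = 0)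
    (hexact : ∀ (Y : B), ∀ i < d, ∀ w : S.I Y ⟶ X (i + 1), w ≫ g i = 0 →
      ∃ e, e ≫ g (i + 1) = w)
    (hexact₀ : ∀ (Y : B) (w : S.I Y ⟶ X 0), ∃ e, e ≫ g 0 = w) :
    ∀ (s : ℕ) (Z : B), s ≤ d →
      (∀ j t, j + t = s → 1 ≤ j → S.sVanish (S.cosyz^[j] Z) (X t)) →
      ∀ r : Z ⟶ X s, r ∈ S.projIdeal Z (X s) → IsCycle g s r →
      ∃ q ∈ S.projIdeal Z (X (s + 1)), q ≫ g s = r := by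
  intro s
  induction s with
  | zero =>
    intro Z _ _ r hr _
    obtain ⟨w, rfl⟩ := S.exists_en_comp_of_mem_projIdeal hr
    obtain ⟨w₁, rfl⟩ := hexact₀ Z w
    exact ⟨S.en Z ≫ w₁, S.en_comp_mem_projIdeal _, Category.assoc _ _ _⟩
  | succ t ih =>
    intro Z hs hvan r hr hcyc
    obtain ⟨w, rfl⟩ := S.exists_en_comp_of_mem_projIdeal hr
    obtain ⟨ρ, hρ, -⟩ := S.ses_coker _ _ (S.ses_cosyz Z) (w ≫ g t)
      ((Category.assoc _ _ _).symm.trans hcyc)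
    have hρcyc : IsCycle g t ρ := by
      cases t with
      | zero => trivial
      | succ t =>
        refine S.ses_epi_cancel (S.ses_cosyz Z) ?_
        rw [reassoc_of% hρ, hgg t (by omega), comp_zero, comp_zero]
    obtain ⟨σ, -, hσ⟩ := ih (S.cosyz Z) (by omega)
      (fun j t' _ _ => hvan (j + 1) t' (by omega) (by omega)) ρ
      (S.sVanish_iff.1 (hvan 1 t (by omega) le_rfl) ρ) hρcyc
    obtain ⟨w₁, hw₁⟩ := hexact Z t (by omega) (w - S.cosyzEpi Z ≫ σ) (by
      rw [Preadditive.sub_comp, Category.assoc, hσ, hρ, sub_self])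
    refine ⟨S.en Z ≫ w₁, S.en_comp_mem_projIdeal _, ?_⟩
    rw [Category.assoc, hw₁, Preadditive.comp_sub, ← Category.assoc,
      S.ses_zero _ _ (S.ses_cosyz Z), zero_comp, sub_zero]

theorem exists_sub_comp_mem_projIdeal {d : ℕ} {X : ℕ → B} {g : ∀ i, X (i + 1) ⟶ X i}
    (hgg : ∀ i < d, g (i + 1) ≫ g i = 0)
    (hexact : ∀ (Y : B), ∀ i < d, ∀ w : S.I Y ⟶ X (i + 1), w ≫ g i = 0 →
      ∃ e, e ≫ g (i + 1) = w)
    (hexact₀ : ∀ (Y : B) (w : S.I Y ⟶ X 0), ∃ e, e ≫ g 0 = w)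
    {i : ℕ} (hi : i < d) {Z : B}
    (hZ : ∀ w : Z ⟶ X (i + 1), w ≫ g i = 0 → ∃ e, e ≫ g (i + 1) = w)
    (hvan : ∀ j t, j + t = i → 1 ≤ j → S.sVanish (S.cosyz^[j] Z) (X t))
    (f : Z ⟶ X (i + 1)) (hf : f ≫ g i ∈ S.projIdeal Z (X i)) :
    ∃ e, f - e ≫ g (i + 1) ∈ S.projIdeal Z (X (i + 1)) := by
  have hcyc : IsCycle g i (f ≫ g i) := by
    cases i with
    | zero => trivial
    | succ i => exact (Category.assoc _ _ _).trans (by rw [hgg i (by omega), comp_zero])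
  obtain ⟨q, hq, hqf⟩ :=
    S.exists_mem_projIdeal_comp_eq_of_isCycle hgg hexact hexact₀ i Z hi.le hvan _ hf hcyc
  obtain ⟨e, he⟩ := hZ (f - q) (by rw [Preadditive.sub_comp, hqf, sub_self])
  exact ⟨e, by rwa [he, sub_sub_cancel]⟩

section Functors

variable (C : Set B)

lemma IsFPStable.eq_zero_of_proj {M : (ObjectProperty.FullSubcategory (· ∈ C))ᵒᵖ ⥤ ModuleCat k}
    (hM : S.IsFPStable C M) {Q : B} (hQC : Q ∈ C) (hQ : S.Proj Q)
    (x : M.obj (Opposite.op ⟨Q, hQC⟩)) : x = 0 := by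
  obtain ⟨_, _, _, _, _, ε, hε⟩ := hM
  obtain ⟨y, rfl⟩ := (hε _).1 x
  obtain ⟨f, rfl⟩ := Submodule.Quotient.mk_surjective _ y
  have hf : (Submodule.Quotient.mk f : (S.SRep C _).obj (Opposite.op ⟨Q, hQC⟩)) = 0 :=
    (Submodule.Quotient.mk_eq_zero _).2 (by simpa using S.comp_mem_projIdeal_of_proj hQ (𝟙 Q) f)
  rw [hf]
  exact map_zero _

lemma projIdeal_le_ker_app (hIC : ∀ Y, S.I Y ∈ C)
    {M : (ObjectProperty.FullSubcategory (· ∈ C))ᵒᵖ ⥤ ModuleCat k} (hM : S.IsFPStable C M)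
    {X : B} (ε : LinRep (k := k) C X ⟶ M) (c : (ObjectProperty.FullSubcategory (· ∈ C))ᵒᵖ) :
    S.projIdeal c.unop.obj X ≤ LinearMap.ker (ε.app c).hom := by
  intro f hf
  obtain ⟨q, rfl⟩ := S.exists_en_comp_of_mem_projIdeal hf
  let u : c.unop ⟶ ⟨S.I c.unop.obj, hIC _⟩ := ObjectProperty.homMk (S.en c.unop.obj)
  have hnat := ConcreteCategory.congr_hom (ε.naturality u.op) q
  change ε.app c (S.en c.unop.obj ≫ q) = M.map u.op (ε.app _ q) at hnat
  change ε.app c (S.en c.unop.obj ≫ q) = 0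
  rw [hnat, IsFPStable.eq_zero_of_proj S C hM _ (S.projI _) (ε.app _ q), map_zero]

noncomputable def sDesc {X : B} {M : (ObjectProperty.FullSubcategory (· ∈ C))ᵒᵖ ⥤ ModuleCat k}
    (ε : LinRep (k := k) C X ⟶ M)
    (hε : ∀ c, S.projIdeal c.unop.obj X ≤ LinearMap.ker (ε.app c).hom) : S.SRep C X ⟶ M where
  app c := ModuleCat.ofHom (Submodule.liftQ _ (ε.app c).hom (hε c))
  naturality c c' u := by
    ext x
    obtain ⟨f, rfl⟩ := Submodule.Quotient.mk_surjective _ x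
    exact ConcreteCategory.congr_hom (ε.naturality u) f

variable {C}

lemma surjective_sDesc_app {X : B} {M : (ObjectProperty.FullSubcategory (· ∈ C))ᵒᵖ ⥤ ModuleCat k}
    {ε : LinRep (k := k) C X ⟶ M} (hε : ∀ c, S.projIdeal c.unop.obj X ≤ LinearMap.ker (ε.app c).hom)
    {c : (ObjectProperty.FullSubcategory (· ∈ C))ᵒᵖ} (h : Function.Surjective (ε.app c)) :
    Function.Surjective ((S.sDesc C ε hε).app c) := fun y =>
  let ⟨f, hf⟩ := h y
  ⟨S.sMk f, hf⟩

lemma exact_sMap_sDesc_app {X Y : B} {M : (ObjectProperty.FullSubcategory (· ∈ C))ᵒᵖ ⥤ ModuleCat k}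
    {ε : LinRep (k := k) C X ⟶ M} (hε : ∀ c, S.projIdeal c.unop.obj X ≤ LinearMap.ker (ε.app c).hom)
    {u : Y ⟶ X} {c : (ObjectProperty.FullSubcategory (· ∈ C))ᵒᵖ}
    (h : Function.Exact ((lMap (k := k) C u).app c) (ε.app c)) :
    Function.Exact ((S.sMap C u).app c) ((S.sDesc C ε hε).app c) := by
  intro y
  constructor
  · intro hy
    obtain ⟨f, rfl⟩ := Submodule.Quotient.mk_surjective _ y
    obtain ⟨e, rfl⟩ := (h f).1 hy
    exact ⟨S.sMk e, rfl⟩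
  · rintro ⟨x, rfl⟩
    obtain ⟨e, rfl⟩ := Submodule.Quotient.mk_surjective _ x
    exact h.apply_apply_eq_zero e

lemma exact_sMap_app {X Y Z : B} {u : X ⟶ Y} {v : Y ⟶ Z} (huv : u ≫ v = 0)
    {c : (ObjectProperty.FullSubcategory (· ∈ C))ᵒᵖ}
    (h : ∀ f : c.unop.obj ⟶ Y, f ≫ v ∈ S.projIdeal _ Z → ∃ e, f - e ≫ u ∈ S.projIdeal _ Y) :
    Function.Exact ((S.sMap C u).app c) ((S.sMap C v).app c) := by
  intro y
  constructor
  · intro hy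
    obtain ⟨f, rfl⟩ := Submodule.Quotient.mk_surjective _ y
    obtain ⟨e, he⟩ := h f ((Submodule.Quotient.mk_eq_zero _).1 hy)
    exact ⟨S.sMk e, (Submodule.Quotient.eq _).2 (by rwa [← neg_mem_iff, neg_sub])⟩
  · rintro ⟨x, rfl⟩
    obtain ⟨e, rfl⟩ := Submodule.Quotient.mk_surjective _ x
    show S.sMk ((e ≫ u) ≫ v) = 0
    rw [Category.assoc, huv, comp_zero]
    exact (Submodule.Quotient.mk_eq_zero _).2 (Submodule.zero_mem _)

end Functors

end FrobeniusSetup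

open FrobeniusSetup in
/-- `Tor^C_{d+1}(M, C̄)` is the kernel of `B̄(-,C_{d+1}) → B̄(-,C_d)` for the projective
resolution `B(-,C_•) → M` in `mod-C`; the conclusion exhibits it as a `(d+2)`-nd syzygy of `M` in
`mod-C̄`, which is `Tor^C_{d+1}(M, C̄) ≅ Ω^{d+2}_{C̄}(M)` modulo projectives. -/
theorem stmt10_tor_is_syzygy_general
    {k : Type} [Field k] {B : Type u} [Category.{v} B] [Preadditive B]
    [CategoryTheory.Linear k B] [HasFiniteBiproducts B] [HasBinaryBiproducts B]
    (S : FrobeniusSetup k B) (d : ℕ) (C : Set B)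
    (hmax : S.MaxOrthogonal C d)
    (hstab : S.ShiftStable C d)
    (M : (ObjectProperty.FullSubcategory (· ∈ C))ᵒᵖ ⥤ ModuleCat k) (hM : S.IsFPStable C M)
    (Cobj : ℕ → B) (hC : ∀ i, i ≤ d + 1 → Cobj i ∈ C)
    (g : ∀ i : ℕ, Cobj (i + 1) ⟶ Cobj i) (ε : LinRep (k := k) C (Cobj 0) ⟶ M)
    (hres : ∀ c, Function.Surjective (ε.app c) ∧
      Function.Exact ((lMap (k := k) C (g 0)).app c) (ε.app c) ∧
      (∀ i, i < d → Function.Exact ((lMap (k := k) C (g (i + 1))).app c)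
        ((lMap (k := k) C (g i)).app c)) ∧
      Function.Injective ((lMap (k := k) C (g d)).app c)) :
    ∃ (D : ℕ → B), (∀ i, i ≤ d + 1 → D i ∈ C) ∧
      ∃ (h : ∀ i : ℕ, D (i + 1) ⟶ D i) (ε' : S.SRep C (D 0) ⟶ M)
        (β : kernel (S.sMap C (g d)) ⟶ S.SRep C (D (d + 1))),
        ∀ c, Function.Injective (β.app c) ∧
          Function.Exact (β.app c) ((S.sMap C (h d)).app c) ∧
          (∀ i, i < d → Function.Exact ((S.sMap C (h (i + 1))).app c)
            ((S.sMap C (h i)).app c)) ∧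
          Function.Exact ((S.sMap C (h 0)).app c) (ε'.app c) ∧
          Function.Surjective (ε'.app c) := by
  have hIC : ∀ Y, S.I Y ∈ C := fun Y => S.mem_of_proj hmax (S.projI Y)
  have hexact : ∀ c (hc : c ∈ C), ∀ i < d, ∀ w : c ⟶ Cobj (i + 1), w ≫ g i = 0 →
      ∃ e, e ≫ g (i + 1) = w := fun c hc i hi w hw =>
    ((hres (Opposite.op ⟨c, hc⟩)).2.2.1 i hi w).1 hw
  have hgg : ∀ i < d, g (i + 1) ≫ g i = 0 := fun i hi => by
    have h : (𝟙 _ ≫ g (i + 1)) ≫ g i = 0 :=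
      ((hres (Opposite.op ⟨_, hC (i + 2) (by omega)⟩)).2.2.1 i hi).apply_apply_eq_zero (𝟙 _)
    simpa using h
  have hexact₀ : ∀ (Y : B) (w : S.I Y ⟶ Cobj 0), ∃ e, e ≫ g 0 = w := fun Y w =>
    ((hres (Opposite.op ⟨_, hIC Y⟩)).2.1 w).1
      (IsFPStable.eq_zero_of_proj S C hM (hIC Y) (S.projI Y) _)
  have hε := S.projIdeal_le_ker_app C hIC hM ε
  refine ⟨Cobj, hC, g, S.sDesc C ε hε, kernel.ι _, fun c =>
    ⟨injective_kernel_ι_app _ c, exact_kernel_ι_app _ c, fun i hi => ?_,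
      S.exact_sMap_sDesc_app hε (hres c).2.1, S.surjective_sDesc_app hε (hres c).1⟩⟩
  refine S.exact_sMap_app (hgg i hi) fun f hf =>
    S.exists_sub_comp_mem_projIdeal hgg (fun Y => hexact _ (hIC Y)) hexact₀ hi
      (hexact _ c.unop.property i hi) (fun j t _ hj => ?_) f hf
  exact S.sVanish_cosyz_iterate_of_maxOrthogonal hmax hstab c.unop.property (hC t (by omega)) hj
    (by omega)

open FrobeniusSetup in
/-- Theorem 2.5(4).  For every `M ∈ mod-C̄` there is an
isomorphism `Tor^C_{d+1}(M,C̄) ≅ Ω^{d+2}_{C̄}(M)` in the stable category of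
`mod-C̄`.  Here `Tor^C_{d+1}(M,C̄)` is computed from a projective resolution of
`M` in `mod-C` as in Theorem 2.5(1) as the kernel of the induced map
`B̄(-,C_{d+1}) → B̄(-,C_d)`; the statement is formalized by exhibiting this
kernel as a `(d+2)`-nd syzygy of `M` in `mod-C̄`: it fits into an exact
sequence `0 → Tor^C_{d+1}(M,C̄) → B̄(-,D_{d+1}) → ⋯ → B̄(-,D₀) → M → 0` of
functors on `C̄` with all `D_i ∈ C` (these are the projectives of `mod-C̄`),
which is precisely the assertion `Tor^C_{d+1}(M,C̄) ≅ Ω^{d+2}_{C̄}(M)` in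
`mod-C̄` modulo projectives. -/
theorem stmt10_tor_is_syzygy
    {k : Type} [Field k] {B : Type u} [Category.{v} B] [Preadditive B]
    [CategoryTheory.Linear k B] [HasFiniteBiproducts B] [HasBinaryBiproducts B]
    (S : FrobeniusSetup k B) (d : ℕ) (hd : 2 ≤ d) (C : Set B)
    (hff : S.FunctoriallyFinite C) (hmax : S.MaxOrthogonal C d)
    (hstab : S.ShiftStable C d)
    (M : (ObjectProperty.FullSubcategory (· ∈ C))ᵒᵖ ⥤ ModuleCat k) (hM : S.IsFPStable C M)
    (Cobj : ℕ → B) (hC : ∀ i, i ≤ d + 1 → Cobj i ∈ C)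
    (g : ∀ i : ℕ, Cobj (i + 1) ⟶ Cobj i) (ε : LinRep (k := k) C (Cobj 0) ⟶ M)
    (hres : ∀ c, Function.Surjective (ε.app c) ∧
      Function.Exact ((lMap (k := k) C (g 0)).app c) (ε.app c) ∧
      (∀ i, i < d → Function.Exact ((lMap (k := k) C (g (i + 1))).app c)
        ((lMap (k := k) C (g i)).app c)) ∧
      Function.Injective ((lMap (k := k) C (g d)).app c)) :
    ∃ (D : ℕ → B), (∀ i, i ≤ d + 1 → D i ∈ C) ∧
      ∃ (h : ∀ i : ℕ, D (i + 1) ⟶ D i) (ε' : S.SRep C (D 0) ⟶ M)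
        (β : kernel (S.sMap C (g d)) ⟶ S.SRep C (D (d + 1))),
        ∀ c, Function.Injective (β.app c) ∧
          Function.Exact (β.app c) ((S.sMap C (h d)).app c) ∧
          (∀ i, i < d → Function.Exact ((S.sMap C (h (i + 1))).app c)
            ((S.sMap C (h i)).app c)) ∧
          Function.Exact ((S.sMap C (h 0)).app c) (ε'.app c) ∧
          Function.Surjective (ε'.app c) :=
  stmt10_tor_is_syzygy_general S d C hmax hstab M hM Cobj hC g ε hres
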